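/- Let 0 < r < 1. An invertible bounded operator J on a complex Hilbert space H belongs to the class 𝒞_{1,r} if and only if (1+r²)·I − J*J − r²·J⁻¹J⁻* = 0. -/
import Mathlib


open ContinuousLinearMap

variable {H : Type*} [NormedAddCommGroup H] [InnerProductSpace ℂ H] [CompleteSpace H]

/-- `S ∈ 𝒬A_r`: there are orthogonal projections `P₀, P₁` with `P₀ + P₁ = I` and
`S*S = r² • P₀ + r⁻² • P₁`. -/
def MemScriptQA (r : ℝ) (S : H →L[ℂ] H) : Prop :=
  ∃ P₀ P₁ : H →L[ℂ] H, IsSelfAdjoint P₀ ∧ IsSelfAdjoint P₁ ∧ P₀ * P₀ = P₀ ∧ P₁ * P₁ = P₁ ∧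
    P₀ + P₁ = 1 ∧ adjoint S * S = ((r : ℂ) ^ 2) • P₀ + ((r : ℂ)⁻¹ ^ 2) • P₁

/-- `J ∈ 𝒞_{1,r}`: there are orthogonal projections `P₀, P₁` with `P₀ + P₁ = I` and
`J*J = P₀ + r² • P₁`. -/
def MemScriptC1r (r : ℝ) (J : H →L[ℂ] H) : Prop :=
  ∃ P₀ P₁ : H →L[ℂ] H, IsSelfAdjoint P₀ ∧ IsSelfAdjoint P₁ ∧ P₀ * P₀ = P₀ ∧ P₁ * P₁ = P₁ ∧
    P₀ + P₁ = 1 ∧ adjoint J * J = P₀ + ((r : ℂ) ^ 2) • P₁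

theorem stmt5 (r : ℝ) (hr0 : 0 < r) (hr1 : r < 1) (J : H →L[ℂ] H) (hJ : IsUnit J) :
    MemScriptC1r r J ↔
      (1 + (r : ℂ) ^ 2) • (1 : H →L[ℂ] H) - adjoint J * J -
        ((r : ℂ) ^ 2) • (Ring.inverse J * adjoint (Ring.inverse J)) = 0 := by
  have hstar : ∀ X Y : H →L[ℂ] H, adjoint (X * Y) = adjoint Y * adjoint X := fun X Y => by
    simp [← star_eq_adjoint, star_mul]
  have hone : adjoint (1 : H →L[ℂ] H) = 1 := by simp [← star_eq_adjoint]
  set c : ℂ := (r : ℂ) ^ 2 with hc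
  set A : H →L[ℂ] H := adjoint J * J with hA
  set B : H →L[ℂ] H := Ring.inverse J * adjoint (Ring.inverse J) with hB
  have hJi : J * Ring.inverse J = 1 := Ring.mul_inverse_cancel J hJ
  have hJi' : Ring.inverse J * J = 1 := Ring.inverse_mul_cancel J hJ
  have hAB : A * B = 1 := by
    rw [hA, hB]
    calc adjoint J * J * (Ring.inverse J * adjoint (Ring.inverse J))
        = adjoint J * (J * Ring.inverse J) * adjoint (Ring.inverse J) := by
          rw [mul_assoc, mul_assoc, mul_assoc]
      _ = adjoint J * adjoint (Ring.inverse J) := by rw [hJi, mul_one]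
      _ = adjoint (Ring.inverse J * J) := (hstar _ _).symm
      _ = 1 := by rw [hJi', hone]
  have hBA : B * A = 1 := by
    rw [hA, hB]
    calc Ring.inverse J * adjoint (Ring.inverse J) * (adjoint J * J)
        = Ring.inverse J * (adjoint (Ring.inverse J) * adjoint J) * J := by
          rw [mul_assoc, mul_assoc, mul_assoc]
      _ = Ring.inverse J * adjoint (J * Ring.inverse J) * J := by rw [hstar]
      _ = 1 := by rw [hJi, hone, mul_one, hJi']
  have hc1 : (1 : ℂ) - c ≠ 0 := by
    rw [hc]
    have h2 : (1 : ℂ) - (r : ℂ) ^ 2 = ((1 - r ^ 2 : ℝ) : ℂ) := by push_cast; ring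
    rw [h2]
    exact Complex.ofReal_ne_zero.mpr (by nlinarith)
  constructor
  · rintro ⟨P₀, P₁, h0, h1, e0, e1, hsum, hAd⟩
    have hP1 : P₁ = 1 - P₀ := by rw [← hsum]; abel
    have h01 : P₀ * P₁ = 0 := by rw [hP1, mul_sub, mul_one, e0, sub_self]
    have h10 : P₁ * P₀ = 0 := by rw [hP1, sub_mul, one_mul, e0, sub_self]
    have hsplit : (1 + c) • (1 : H →L[ℂ] H) - A = c • P₀ + P₁ := by
      rw [hc, hA, hAd, ← hsum]; module
    have key : A * ((1 + c) • (1 : H →L[ℂ] H) - A) = c • 1 := by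
      rw [hsplit, hc, hA, hAd]
      have : (P₀ + (r : ℂ) ^ 2 • P₁) * ((r : ℂ) ^ 2 • P₀ + P₁)
          = (r : ℂ) ^ 2 • (P₀ * P₀) + P₀ * P₁ + ((r : ℂ) ^ 2 * (r : ℂ) ^ 2) • (P₁ * P₀)
            + (r : ℂ) ^ 2 • (P₁ * P₁) := by
        simp only [mul_add, add_mul, smul_mul_assoc, mul_smul_comm, smul_smul]
        module
      rw [this, e0, e1, h01, h10, ← hsum]
      module
    have hcB : c • B = (1 + c) • (1 : H →L[ℂ] H) - A := by
      calc c • B = B * (c • 1) := by rw [mul_smul_comm, mul_one]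
        _ = B * (A * ((1 + c) • (1 : H →L[ℂ] H) - A)) := by rw [key]
        _ = (B * A) * ((1 + c) • (1 : H →L[ℂ] H) - A) := (mul_assoc _ _ _).symm
        _ = (1 + c) • (1 : H →L[ℂ] H) - A := by rw [hBA, one_mul]
    rw [hcB]; abel
  · intro h
    have hcB : c • B = (1 + c) • (1 : H →L[ℂ] H) - A := by
      rw [sub_eq_zero] at h; exact h.symm
    have hA2 : A * A = (1 + c) • A - c • (1 : H →L[ℂ] H) := by
      have h1 : A * (c • B) = c • (1 : H →L[ℂ] H) := by
        rw [mul_smul_comm, hAB]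
      rw [hcB, mul_sub, mul_smul_comm, mul_one] at h1
      rw [eq_sub_iff_add_eq, ← h1]
      abel
    set d : ℂ := (1 - c)⁻¹ with hd
    have hdc : d * (1 - c) = 1 := inv_mul_cancel₀ hc1
    have hAsa : IsSelfAdjoint A := by
      rw [IsSelfAdjoint, hA]
      simp [star_mul, star_eq_adjoint, adjoint_adjoint]
    have hcr : IsSelfAdjoint c := by
      rw [IsSelfAdjoint, hc, star_pow, Complex.star_def, Complex.conj_ofReal]
    have hdr : IsSelfAdjoint d := by
      rw [IsSelfAdjoint, hd, star_inv₀, star_sub, star_one, hcr.star_eq]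
    refine ⟨d • (A - c • 1), d • (1 - A), ?_, ?_, ?_, ?_, ?_, ?_⟩
    · exact hdr.smul (hAsa.sub (hcr.smul (IsSelfAdjoint.one _)))
    · exact hdr.smul ((IsSelfAdjoint.one _).sub hAsa)
    · have expand : (A - c • 1) * (A - c • 1) = (1 - c) • (A - c • 1) := by
        simp only [sub_mul, mul_sub, hA2, mul_smul_comm, smul_mul_assoc, smul_smul,
          mul_one, one_mul]
        module
      rw [smul_mul_assoc, mul_smul_comm, smul_smul, expand, smul_smul, mul_assoc, hdc,
        mul_one]
    · have expand : ((1 : H →L[ℂ] H) - A) * (1 - A) = (1 - c) • (1 - A) := by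
        simp only [sub_mul, mul_sub, hA2, mul_one, one_mul]
        module
      rw [smul_mul_assoc, mul_smul_comm, smul_smul, expand, smul_smul, mul_assoc, hdc,
        mul_one]
    · have e : (A - c • 1) + ((1 : H →L[ℂ] H) - A) = (1 - c) • 1 := by module
      rw [← smul_add, e, smul_smul, hdc, one_smul]
    · have key2 : (A - c • 1) + c • ((1 : H →L[ℂ] H) - A) = (1 - c) • A := by module
      show A = d • (A - c • 1) + c • (d • (1 - A))
      rw [smul_comm c d, ← smul_add, key2, smul_smul, hdc, one_smul]
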